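/- Let μ be a translation-invariant and reflection-invariant probability measure on {0,?,1}^ℤ. Then μ(?) ≥ μ(⟨***⟩) - 2μ(0?) + μ(?0?) - 2μ(100?) + 2μ(1⟨***⟩) + 2μ(1??1) + μ(1?1) + 4μ(1?01), where ⟨***⟩ denotes three consecutive coordinates lying in {0,?}³ \ {(0,0,0)} and concatenated strings denote cylinder events. -/

import Mathlib

open MeasureTheory

inductive PSym : Type
  | zero : PSym
  | quest : PSym
  | one : PSym
deriving DecidableEq

instance instFintypePSym : Fintype PSym :=
  ⟨{PSym.zero, PSym.quest, PSym.one}, fun x => by cases x <;> simp⟩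

instance : MeasurableSpace PSym := ⊤

abbrev Config : Type := ℤ → PSym

open PSym

/-- the symbol lies in `{0, ?}` -/
def lowQ (a : PSym) : Prop := a = PSym.zero ∨ a = PSym.quest

instance : DecidablePred lowQ := fun a => by unfold lowQ; infer_instance

/-- the window `(η k, η (k+1))` lies in `{0,?}² \ {(0,0)}` -/
def star2 (η : Config) (k : ℤ) : Prop :=
  lowQ (η k) ∧ lowQ (η (k + 1)) ∧ ¬(η k = PSym.zero ∧ η (k + 1) = PSym.zero)

/-- the window `(η k, η (k+1), η (k+2))` lies in `{0,?}³ \ {(0,0,0)}` -/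
def star3 (η : Config) (k : ℤ) : Prop :=
  lowQ (η k) ∧ lowQ (η (k + 1)) ∧ lowQ (η (k + 2)) ∧
    ¬(η k = PSym.zero ∧ η (k + 1) = PSym.zero ∧ η (k + 2) = PSym.zero)

/-- translation by `k` -/
def shiftBy (k : ℤ) (η : Config) : Config := fun n => η (n + k)

/-- reflection -/
def reflect (η : Config) : Config := fun n => η (-n)

/-!
The inequality is an identity. Splitting a coordinate of a cylinder according to
`{0,?} = {0} ∪ {?}` or `{0,?,1} = {0,?} ∪ {1}`, adding free coordinates at either end by
translation invariance and reversing words by reflection invariance, both sides reduce to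
`μ(?∗∗) + μ(10?∗) + μ(1?0∗) + 2μ(1??) + μ(1?1) + 2μ(1?01)`, where `∗` stands for `{0,?}`.
-/

open MeasureTheory PSym

def cylAt : ℤ → List (Set PSym) → Set Config
  | _, [] => Set.univ
  | k, s :: w => {η | η k ∈ s} ∩ cylAt (k + 1) w

@[simp]
lemma cylAt_nil (k : ℤ) : cylAt k [] = Set.univ := rfl

@[simp]
lemma mem_cylAt_cons {η : Config} {k : ℤ} {s : Set PSym} {w : List (Set PSym)} :
    η ∈ cylAt k (s :: w) ↔ η k ∈ s ∧ η ∈ cylAt (k + 1) w := Iff.rfl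

lemma measurableSet_cylAt : ∀ (k : ℤ) (w : List (Set PSym)), MeasurableSet (cylAt k w)
  | _, [] => MeasurableSet.univ
  | k, _ :: w =>
    (measurable_pi_apply k MeasurableSpace.measurableSet_top).inter (measurableSet_cylAt (k + 1) w)

lemma cylAt_append (u v : List (Set PSym)) (k : ℤ) :
    cylAt k (u ++ v) = cylAt k u ∩ cylAt (k + u.length) v := by
  induction u generalizing k with
  | nil => simp
  | cons s u ih =>
    rw [List.cons_append, cylAt, cylAt, ih, Set.inter_assoc, List.length_cons]
    push_cast
    ring_nf

lemma cylAt_append_union (s t : Set PSym) (u v : List (Set PSym)) (k : ℤ) :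
    cylAt k (u ++ (s ∪ t) :: v) = cylAt k (u ++ s :: v) ∪ cylAt k (u ++ t :: v) := by
  simp only [cylAt_append, cylAt, Set.mem_union, Set.ofPred_or, Set.union_inter_distrib_right,
    Set.inter_union_distrib_left]

lemma disjoint_cylAt_append {s t : Set PSym} (hst : Disjoint s t) (u v : List (Set PSym))
    (k : ℤ) : Disjoint (cylAt k (u ++ s :: v)) (cylAt k (u ++ t :: v)) := by
  simp only [Set.disjoint_left, cylAt_append, Set.mem_inter_iff, mem_cylAt_cons]
  exact fun η hs ht => Set.disjoint_left.mp hst hs.2.1 ht.2.1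

lemma cylAt_mono {u v : List (Set PSym)} (h : List.Forall₂ (· ⊆ ·) u v) (k : ℤ) :
    cylAt k u ⊆ cylAt k v := by
  induction h generalizing k with
  | nil => exact subset_rfl
  | cons hst _ ih => exact Set.inter_subset_inter (fun η hη => hst hη) (ih (k + 1))

lemma cylAt_univ_cons (w : List (Set PSym)) (k : ℤ) :
    cylAt k (Set.univ :: w) = cylAt (k + 1) w := by
  simp [cylAt]

lemma preimage_shiftBy_cylAt (j : ℤ) (w : List (Set PSym)) (k : ℤ) :
    shiftBy j ⁻¹' cylAt k w = cylAt (k + j) w := by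
  induction w generalizing k with
  | nil => rfl
  | cons s w ih =>
    rw [cylAt, cylAt, Set.preimage_inter, ih, add_right_comm]
    rfl

lemma preimage_reflect_cylAt (w : List (Set PSym)) (k : ℤ) :
    reflect ⁻¹' cylAt k w = cylAt (1 - k - w.length) w.reverse := by
  induction w generalizing k with
  | nil => rfl
  | cons s w ih =>
    rw [cylAt, Set.preimage_inter, ih, List.reverse_cons, cylAt_append, Set.inter_comm]
    simp only [List.length_cons, List.length_reverse, Nat.cast_succ]
    congr 1
    · congr 1; ring
    · ext η
      simp [reflect, show 1 - k - (w.length + 1) + w.length = -k by ring]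

lemma measurePreserving_shiftBy {μ : Measure Config}
    (hshift : ∀ k : ℤ, Measure.map (shiftBy k) μ = μ) (k : ℤ) :
    MeasurePreserving (shiftBy k) μ μ :=
  ⟨measurable_pi_lambda _ fun n => measurable_pi_apply (n + k), hshift k⟩

lemma measurePreserving_reflect {μ : Measure Config} (hrefl : Measure.map reflect μ = μ) :
    MeasurePreserving reflect μ μ :=
  ⟨measurable_pi_lambda _ fun n => measurable_pi_apply (-n), hrefl⟩

noncomputable def pr (μ : Measure Config) (w : List (Set PSym)) : ℝ :=
  μ.real (cylAt 0 w)

section Cylinders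

variable {μ : Measure Config}

lemma measureReal_cylAt (hshift : ∀ k : ℤ, Measure.map (shiftBy k) μ = μ)
    (k : ℤ) (w : List (Set PSym)) : μ.real (cylAt k w) = pr μ w := by
  rw [pr, ← (measurePreserving_shiftBy hshift k).measureReal_preimage
    (measurableSet_cylAt 0 w).nullMeasurableSet, preimage_shiftBy_cylAt, zero_add]

lemma pr_reverse (hshift : ∀ k : ℤ, Measure.map (shiftBy k) μ = μ)
    (hrefl : Measure.map reflect μ = μ) (w : List (Set PSym)) :
    pr μ w.reverse = pr μ w := by
  rw [eq_comm, pr, ← (measurePreserving_reflect hrefl).measureReal_preimage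
    (measurableSet_cylAt 0 w).nullMeasurableSet, preimage_reflect_cylAt,
    measureReal_cylAt hshift]

lemma pr_univ_cons (hshift : ∀ k : ℤ, Measure.map (shiftBy k) μ = μ)
    (w : List (Set PSym)) : pr μ (Set.univ :: w) = pr μ w := by
  rw [pr, cylAt_univ_cons, measureReal_cylAt hshift]

lemma pr_append_univ (w : List (Set PSym)) : pr μ (w ++ [Set.univ]) = pr μ w := by
  simp [pr, cylAt_append, cylAt]

variable [IsFiniteMeasure μ]

lemma pr_append_union {s t : Set PSym} (hst : Disjoint s t) (u v : List (Set PSym)) :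
    pr μ (u ++ (s ∪ t) :: v) = pr μ (u ++ s :: v) + pr μ (u ++ t :: v) := by
  rw [pr, cylAt_append_union,
    measureReal_union (disjoint_cylAt_append hst u v 0) (measurableSet_cylAt _ _)]
  rfl

lemma measureReal_cylAt_sdiff {u v : List (Set PSym)} (h : List.Forall₂ (· ⊆ ·) v u) :
    μ.real (cylAt 0 u \ cylAt 0 v) = pr μ u - pr μ v :=
  measureReal_sdiff (cylAt_mono h 0) (measurableSet_cylAt 0 v)

end Cylinders

-- The paper's word `1?0∗` is the cylinder `[𝟭, ？, 𝟬, ∗]`.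
local notation "𝟬" => (singleton PSym.zero : Set PSym)
local notation "？" => (singleton PSym.quest : Set PSym)
local notation "𝟭" => (singleton PSym.one : Set PSym)
local notation "∗" => Set.ofPred lowQ

lemma lowQ_eq_union : ∗ = 𝟬 ∪ ？ := by
  ext a
  simp [lowQ]
  tauto

lemma univ_eq_lowQ_union : (Set.univ : Set PSym) = ∗ ∪ 𝟭 := by
  ext a
  cases a <;> simp [lowQ]

lemma disjoint_zero_quest : Disjoint 𝟬 ？ := by simp

lemma disjoint_lowQ_one : Disjoint ∗ 𝟭 := by simp [lowQ]

section Splitting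

variable {μ : Measure Config} [IsFiniteMeasure μ]

lemma pr_append_lowQ (u v : List (Set PSym)) :
    pr μ (u ++ ∗ :: v) = pr μ (u ++ 𝟬 :: v) + pr μ (u ++ ？ :: v) := by
  rw [lowQ_eq_union, pr_append_union disjoint_zero_quest]

lemma pr_eq_append_lowQ_add (w : List (Set PSym)) :
    pr μ w = pr μ (w ++ [∗]) + pr μ (w ++ [𝟭]) := by
  rw [← pr_append_union disjoint_lowQ_one, ← univ_eq_lowQ_union, pr_append_univ]

lemma pr_eq_lowQ_cons_add (hshift : ∀ k : ℤ, Measure.map (shiftBy k) μ = μ)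
    (w : List (Set PSym)) : pr μ w = pr μ (∗ :: w) + pr μ (𝟭 :: w) := by
  rw [← List.nil_append (∗ :: w), ← List.nil_append (𝟭 :: w),
    ← pr_append_union disjoint_lowQ_one, ← univ_eq_lowQ_union, List.nil_append,
    pr_univ_cons hshift]

lemma pr_append_lowQ3_sub (u : List (Set PSym)) :
    pr μ (u ++ [∗, ∗, ∗]) - pr μ (u ++ [𝟬, 𝟬, 𝟬]) =
      pr μ (u ++ [𝟬, 𝟬, ？]) + pr μ (u ++ [𝟬, ？, ∗]) + pr μ (u ++ [？, ∗, ∗]) := by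
  have h1 := pr_append_lowQ (μ := μ) u [∗, ∗]
  have h2 := pr_append_lowQ (μ := μ) (u ++ [𝟬]) [∗]
  have h3 := pr_append_lowQ (μ := μ) (u ++ [𝟬, 𝟬]) []
  simp only [List.append_assoc, List.cons_append, List.nil_append] at h1 h2 h3
  linarith

end Splitting

section Identity

variable {μ : Measure Config} [IsFiniteMeasure μ]

lemma pr_quest_eq_sum (hshift : ∀ k : ℤ, Measure.map (shiftBy k) μ = μ)
    (hrefl : Measure.map reflect μ = μ) :
    pr μ [？] = pr μ [？, ∗, ∗] + pr μ [𝟭, 𝟬, ？, ∗] + pr μ [𝟭, ？, 𝟬, ∗] +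
      2 * pr μ [𝟭, ？, ？] + pr μ [𝟭, ？, 𝟭] + 2 * pr μ [𝟭, ？, 𝟬, 𝟭] := by
  have hrev : ∀ w, pr μ (List.reverse w) = pr μ w := pr_reverse hshift hrefl
  have : pr μ [？] = pr μ [？, ∗] + pr μ [？, 𝟭] := pr_eq_append_lowQ_add _
  have : pr μ [？, ∗] = pr μ [？, ∗, ∗] + pr μ [？, ∗, 𝟭] := pr_eq_append_lowQ_add _
  have : pr μ [？, ∗, 𝟭] = pr μ [？, 𝟬, 𝟭] + pr μ [？, ？, 𝟭] := pr_append_lowQ [？] _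
  have : pr μ [𝟭, ？] = pr μ [𝟭, ？, ∗] + pr μ [𝟭, ？, 𝟭] := pr_eq_append_lowQ_add _
  have : pr μ [𝟭, ？, ∗] = pr μ [𝟭, ？, 𝟬] + pr μ [𝟭, ？, ？] := pr_append_lowQ [𝟭, ？] _
  have : pr μ [𝟭, 𝟬, ？] = pr μ [𝟭, 𝟬, ？, ∗] + pr μ [𝟭, 𝟬, ？, 𝟭] :=
    pr_eq_append_lowQ_add _
  have : pr μ [𝟭, ？, 𝟬] = pr μ [𝟭, ？, 𝟬, ∗] + pr μ [𝟭, ？, 𝟬, 𝟭] :=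
    pr_eq_append_lowQ_add _
  have : pr μ [？, 𝟬, 𝟭] = pr μ [𝟭, 𝟬, ？] := hrev [𝟭, 𝟬, ？]
  have : pr μ [？, ？, 𝟭] = pr μ [𝟭, ？, ？] := hrev [𝟭, ？, ？]
  have : pr μ [？, 𝟭] = pr μ [𝟭, ？] := hrev [𝟭, ？]
  have : pr μ [𝟭, 𝟬, ？, 𝟭] = pr μ [𝟭, ？, 𝟬, 𝟭] := hrev [𝟭, ？, 𝟬, 𝟭]
  linarith

lemma pr_rhs_eq_sum (hshift : ∀ k : ℤ, Measure.map (shiftBy k) μ = μ)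
    (hrefl : Measure.map reflect μ = μ) :
    (pr μ [∗, ∗, ∗] - pr μ [𝟬, 𝟬, 𝟬]) - 2 * pr μ [𝟬, ？] + pr μ [？, 𝟬, ？] -
        2 * pr μ [𝟭, 𝟬, 𝟬, ？] + 2 * (pr μ [𝟭, ∗, ∗, ∗] - pr μ [𝟭, 𝟬, 𝟬, 𝟬]) +
        2 * pr μ [𝟭, ？, ？, 𝟭] + pr μ [𝟭, ？, 𝟭] + 4 * pr μ [𝟭, ？, 𝟬, 𝟭] =
      pr μ [？, ∗, ∗] + pr μ [𝟭, 𝟬, ？, ∗] + pr μ [𝟭, ？, 𝟬, ∗] +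
        2 * pr μ [𝟭, ？, ？] + pr μ [𝟭, ？, 𝟭] + 2 * pr μ [𝟭, ？, 𝟬, 𝟭] := by
  have hrev : ∀ w, pr μ (List.reverse w) = pr μ w := pr_reverse hshift hrefl
  have : pr μ [∗, ∗, ∗] - pr μ [𝟬, 𝟬, 𝟬] =
      pr μ [𝟬, 𝟬, ？] + pr μ [𝟬, ？, ∗] + pr μ [？, ∗, ∗] := pr_append_lowQ3_sub []
  have : pr μ [𝟭, ∗, ∗, ∗] - pr μ [𝟭, 𝟬, 𝟬, 𝟬] =
      pr μ [𝟭, 𝟬, 𝟬, ？] + pr μ [𝟭, 𝟬, ？, ∗] + pr μ [𝟭, ？, ∗, ∗] := pr_append_lowQ3_sub [𝟭]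
  have : pr μ [𝟬, ？] = pr μ [∗, 𝟬, ？] + pr μ [𝟭, 𝟬, ？] := pr_eq_lowQ_cons_add hshift _
  have : pr μ [∗, 𝟬, ？] = pr μ [𝟬, 𝟬, ？] + pr μ [？, 𝟬, ？] := pr_append_lowQ [] _
  have : pr μ [𝟬, ？] = pr μ [𝟬, ？, ∗] + pr μ [𝟬, ？, 𝟭] := pr_eq_append_lowQ_add _
  have : pr μ [𝟭, 𝟬, ？] = pr μ [𝟭, 𝟬, ？, ∗] + pr μ [𝟭, 𝟬, ？, 𝟭] :=
    pr_eq_append_lowQ_add _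
  have : pr μ [𝟭, ？, 𝟬] = pr μ [𝟭, ？, 𝟬, ∗] + pr μ [𝟭, ？, 𝟬, 𝟭] :=
    pr_eq_append_lowQ_add _
  have : pr μ [𝟭, ？, ∗, ∗] = pr μ [𝟭, ？, 𝟬, ∗] + pr μ [𝟭, ？, ？, ∗] :=
    pr_append_lowQ [𝟭, ？] _
  have : pr μ [𝟭, ？, ？] = pr μ [𝟭, ？, ？, ∗] + pr μ [𝟭, ？, ？, 𝟭] :=
    pr_eq_append_lowQ_add _
  have : pr μ [𝟬, ？, 𝟭] = pr μ [𝟭, ？, 𝟬] := hrev [𝟭, ？, 𝟬]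
  have : pr μ [𝟭, 𝟬, ？, 𝟭] = pr μ [𝟭, ？, 𝟬, 𝟭] := hrev [𝟭, ？, 𝟬, 𝟭]
  linarith

end Identity

theorem stmt9 (μ : Measure Config) [IsProbabilityMeasure μ]
    (hshift : ∀ k : ℤ, Measure.map (shiftBy k) μ = μ)
    (hrefl : Measure.map reflect μ = μ) :
    (μ {η | η 0 = quest}).toReal ≥
      (μ {η | star3 η 0}).toReal - 2 * (μ {η | η 0 = zero ∧ η 1 = quest}).toReal +
        (μ {η | η 0 = quest ∧ η 1 = zero ∧ η 2 = quest}).toReal -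
        2 * (μ {η | η 0 = one ∧ η 1 = zero ∧ η 2 = zero ∧ η 3 = quest}).toReal +
        2 * (μ {η | η 0 = one ∧ star3 η 1}).toReal +
        2 * (μ {η | η 0 = one ∧ η 1 = quest ∧ η 2 = quest ∧ η 3 = one}).toReal +
        (μ {η | η 0 = one ∧ η 1 = quest ∧ η 2 = one}).toReal +
        4 * (μ {η | η 0 = one ∧ η 1 = quest ∧ η 2 = zero ∧ η 3 = one}).toReal := by
  refine le_of_eq ?_
  simp only [← measureReal_def]
  convert ((pr_quest_eq_sum hshift hrefl).trans (pr_rhs_eq_sum hshift hrefl).symm).symm using 10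
  -- each remaining goal identifies an event of the statement with a cylinder or, for the
  -- `star3` events, with a difference of two cylinders
  all_goals first
    | rw [pr]; congr 1; ext η; simp
    | rw [← measureReal_cylAt_sdiff (by simp [lowQ])]; congr 1; ext η; simp [star3, lowQ]; tauto
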